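/- Horodecki positive-maps separability criterion: A density matrix ρ on ℂ^{d_A} ⊗ ℂ^{d_B} is separable if and only if for every positive linear map Λ from d_B × d_B complex matrices to d_A × d_A complex matrices, the matrix (I_{d_A} ⊗ Λ)(ρ) is positive semidefinite. -/

import Mathlib

open scoped BigOperators ComplexOrder

/-- The rank-one matrix `x x*`, with entries `(x x*)_{ij} = x i * conj (x j)`. -/
def vecProjector {d : ℕ} (x : Fin d → ℂ) : Matrix (Fin d) (Fin d) ℂ :=
  fun i j => x i * (starRingEnd ℂ) (x j)

/-- A density matrix on `ℂ^{d_A} ⊗ ℂ^{d_B}` is separable if it is a finite convex combination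
of Kronecker products of rank-one projectors onto unit vectors. -/
def SeparableState {dA dB : ℕ}
    (ρ : Matrix (Fin dA × Fin dB) (Fin dA × Fin dB) ℂ) : Prop :=
  ∃ (K : ℕ) (p : Fin K → ℝ) (x : Fin K → Fin dA → ℂ) (y : Fin K → Fin dB → ℂ),
    (∀ k, 0 ≤ p k) ∧ (∑ k, p k = 1) ∧
    (∀ k, ∑ a, Complex.normSq (x k a) = 1) ∧
    (∀ k, ∑ b, Complex.normSq (y k b) = 1) ∧
    ρ = ∑ k, (p k : ℂ) •
      Matrix.kroneckerMap (· * ·) (vecProjector (x k)) (vecProjector (y k))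

/-- A linear map between matrix algebras is positive if it maps positive semidefinite
matrices to positive semidefinite matrices. -/
def IsPositiveMap {d d' : ℕ}
    (Λ : Matrix (Fin d) (Fin d) ℂ →ₗ[ℂ] Matrix (Fin d') (Fin d') ℂ) : Prop :=
  ∀ X : Matrix (Fin d) (Fin d) ℂ, X.PosSemidef → (Λ X).PosSemidef

/-- The blockwise extension `I_n ⊗ Λ`, defined by
`((I_n ⊗ Λ)(X))_{(i,μ),(j,ν)} = (Λ(X^{(i,j)}))_{μν}` where `X^{(i,j)}_{μν} = X_{(i,μ),(j,ν)}`. -/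
def extendMap {n d d' : ℕ}
    (Λ : Matrix (Fin d) (Fin d) ℂ →ₗ[ℂ] Matrix (Fin d') (Fin d') ℂ)
    (X : Matrix (Fin n × Fin d) (Fin n × Fin d) ℂ) :
    Matrix (Fin n × Fin d') (Fin n × Fin d') ℂ :=
  fun p q => Λ (Matrix.of fun μ ν => X (p.1, μ) (q.1, ν)) p.2 q.2

/-!
Separable states pass the test because `I ⊗ Λ` maps `P ⊗ Q` to `P ⊗ Λ Q`, a Kronecker product of
positive semidefinite matrices. Conversely, the separable states are the convex hull of the compact
set of pure product states, so an entangled `ρ` is strictly separated from them by a real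
functional. Shifted by a multiple of the trace, this functional becomes `A ↦ ∑ W_pq A_pq` for a
Hermitian `W` that is nonnegative on product states and negative on `ρ`. The map `Λ` whose Choi
matrix is `W` is then positive, while `(I ⊗ Λ)(ρ)` has the negative expectation value `⟪W, ρ⟫` in
the maximally entangled vector `∑ᵢ eᵢ ⊗ eᵢ`.
-/

open scoped Kronecker
open Matrix

open Set in
theorem isCompact_convexHull {E : Type*} [AddCommGroup E] [Module ℝ E] [TopologicalSpace E]
    [ContinuousAdd E] [ContinuousSMul ℝ E] [FiniteDimensional ℝ E] {s : Set E}
    (hs : IsCompact s) : IsCompact (convexHull ℝ s) := by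
  rcases s.eq_empty_or_nonempty with rfl | ⟨z₀, hz₀⟩
  · simp
  set N := Module.finrank ℝ E + 1
  let combine : (Fin N → ℝ) × (Fin N → E) → E := fun wz => ∑ i, wz.1 i • wz.2 i
  suffices combine '' (stdSimplex ℝ (Fin N) ×ˢ univ.pi fun _ => s) = convexHull ℝ s by
    rw [← this]
    exact ((isCompact_stdSimplex ℝ (Fin N)).prod (isCompact_univ_pi fun _ => hs)).image
      (by fun_prop)
  refine Subset.antisymm ?_ fun x hx => ?_
  · rintro _ ⟨⟨w, z⟩, ⟨hw, hz⟩, rfl⟩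
    exact (convex_convexHull ℝ s).sum_mem (fun i _ => hw.1 i) hw.2
      fun i _ => subset_convexHull ℝ s (hz i (mem_univ i))
  -- Carathéodory: at most `finrank + 1` points are needed; pad with zero weights.
  obtain ⟨ι, _, z, w, hzs, hind, hw, hw1, rfl⟩ := eq_pos_convex_span_of_mem_convexHull hx
  obtain ⟨e⟩ : Nonempty (ι ↪ Fin N) :=
    Function.Embedding.nonempty_of_card_le <| by
      simpa [N] using hind.card_le_finrank_succ.trans (Nat.succ_le_succ (Submodule.finrank_le _))
  classical
  have he : Function.Injective e := e.injective
  refine ⟨⟨Function.extend e w 0, Function.extend e z fun _ => z₀⟩, ⟨⟨fun i => ?_, ?_⟩, ?_⟩, ?_⟩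
  · by_cases hi : ∃ j, e j = i
    · obtain ⟨j, rfl⟩ := hi
      simpa [he.extend_apply] using (hw j).le
    · simp [Function.extend_apply' _ _ _ hi]
  · rw [← hw1]
    refine (Fintype.sum_of_injective e he _ _ (fun i hi => ?_) fun j => ?_).symm
    · simp [Function.extend_apply' _ _ _ hi]
    · simp [he.extend_apply]
  · intro i _
    by_cases hi : ∃ j, e j = i
    · obtain ⟨j, rfl⟩ := hi
      simpa [he.extend_apply] using hzs (mem_range_self j)
    · simpa [Function.extend_apply' _ _ _ hi] using hz₀
  · refine (Fintype.sum_of_injective e he _ _ (fun i hi => ?_) fun j => ?_).symm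
    · simp [Function.extend_apply' _ _ _ hi]
    · simp [he.extend_apply]

section VecProjector

variable {d : ℕ}

theorem vecProjector_eq_vecMulVec (x : Fin d → ℂ) : vecProjector x = vecMulVec x (star x) := rfl

theorem posSemidef_vecProjector (x : Fin d → ℂ) : (vecProjector x).PosSemidef :=
  posSemidef_vecMulVec_self_star x

theorem trace_vecProjector (x : Fin d → ℂ) :
    (vecProjector x).trace = ((∑ i, Complex.normSq (x i) : ℝ) : ℂ) := by
  simp [trace, vecProjector, Complex.mul_conj]

theorem vecProjector_smul (c : ℂ) (x : Fin d → ℂ) :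
    vecProjector (c • x) = (Complex.normSq c : ℂ) • vecProjector x := by
  ext i j
  simp only [vecProjector, Pi.smul_apply, smul_eq_mul, map_mul, Matrix.smul_apply,
    ← Complex.mul_conj]
  ring

theorem vecProjector_zero : vecProjector (0 : Fin d → ℂ) = 0 := by
  ext i j
  simp [vecProjector]

theorem exists_eq_smul_unit {x : Fin d → ℂ} (hx : x ≠ 0) :
    ∃ (c : ℂ) (u : Fin d → ℂ), ∑ i, Complex.normSq (u i) = 1 ∧ x = c • u := by
  set r := ∑ i, Complex.normSq (x i)
  have hr : 0 < r := by
    obtain ⟨i, hi⟩ := Function.ne_iff.1 hx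
    exact Finset.sum_pos' (fun j _ => Complex.normSq_nonneg _)
      ⟨i, Finset.mem_univ _, Complex.normSq_pos.2 hi⟩
  have hc : (Real.sqrt r : ℂ) ≠ 0 := by exact_mod_cast (Real.sqrt_pos.2 hr).ne'
  refine ⟨Real.sqrt r, (Real.sqrt r : ℂ)⁻¹ • x, ?_, by rw [smul_inv_smul₀ hc]⟩
  simp only [Pi.smul_apply, smul_eq_mul, Complex.normSq_mul, ← Finset.mul_sum, map_inv₀,
    Complex.normSq_ofReal, Real.mul_self_sqrt hr.le]
  exact inv_mul_cancel₀ hr.ne'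

end VecProjector

section Pairing

variable {ι : Type*} [Fintype ι]

/-- The bilinear pairing `⟪W, A⟫ = tr (Wᵀ A)`. -/
def matrixPairing : Matrix ι ι ℂ →ₗ[ℂ] Matrix ι ι ℂ →ₗ[ℂ] ℂ :=
  LinearMap.mk₂ ℂ (fun W A => ∑ p, ∑ q, W p q * A p q)
    (fun _ _ _ => by simp [add_mul, Finset.sum_add_distrib])
    (fun _ _ _ => by simp [Finset.mul_sum, mul_assoc])
    (fun _ _ _ => by simp [mul_add, Finset.sum_add_distrib])
    (fun _ _ _ => by simp [Finset.mul_sum, mul_left_comm])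

theorem matrixPairing_apply (W A : Matrix ι ι ℂ) :
    matrixPairing W A = ∑ p, ∑ q, W p q * A p q := rfl

theorem matrixPairing_one_left [DecidableEq ι] (A : Matrix ι ι ℂ) :
    matrixPairing 1 A = A.trace := by
  simp [matrixPairing_apply, Matrix.one_apply, trace]

theorem star_matrixPairing (W A : Matrix ι ι ℂ) :
    star (matrixPairing W A) = matrixPairing Wᴴ Aᴴ := by
  simp only [matrixPairing_apply, star_sum, star_mul', conjTranspose_apply]
  exact Finset.sum_comm

theorem matrixPairing_hermitianPart_eq_re (W : Matrix ι ι ℂ) {A : Matrix ι ι ℂ}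
    (hA : A.IsHermitian) :
    matrixPairing ((2⁻¹ : ℂ) • (W + Wᴴ)) A = (matrixPairing W A).re := by
  rw [Complex.re_eq_add_conj, ← Complex.star_def, star_matrixPairing, hA.eq, LinearMap.map_smul₂,
    map_add, LinearMap.add_apply, smul_eq_mul]
  ring

theorem exists_isHermitian_matrixPairing_eq_re [DecidableEq ι] (f : Matrix ι ι ℂ →ₗ[ℂ] ℂ) :
    ∃ H : Matrix ι ι ℂ, H.IsHermitian ∧ ∀ A, A.IsHermitian → matrixPairing H A = (f A).re := by
  set W : Matrix ι ι ℂ := of fun p q => f (single p q 1)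
  have hW : ∀ A, f A = matrixPairing W A := fun A => by
    conv_lhs => rw [matrix_eq_sum_single A]
    refine (map_sum _ _ _).trans (Finset.sum_congr rfl fun p _ => ?_)
    refine (map_sum _ _ _).trans (Finset.sum_congr rfl fun q _ => ?_)
    have : single p q (A p q) = A p q • single p q (1 : ℂ) := by
      rw [smul_single, smul_eq_mul, mul_one]
    rw [this, map_smul, smul_eq_mul, mul_comm]
    rfl
  refine ⟨(2⁻¹ : ℂ) • (W + Wᴴ), ?_, fun A hA => by rw [hW, matrixPairing_hermitianPart_eq_re W hA]⟩
  simp [IsHermitian, conjTranspose_smul, add_comm]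

end Pairing

section OfChoiMatrix

variable {m n : Type*} [Fintype n]

/-- The map whose Choi matrix `∑ E_αβ ⊗ Λ(E_αβ)` is `W` with its two tensor factors swapped. -/
def ofChoiMatrix (W : Matrix (m × n) (m × n) ℂ) : Matrix n n ℂ →ₗ[ℂ] Matrix m m ℂ where
  toFun X := of fun μ ν => ∑ α, ∑ β, W (μ, α) (ν, β) * X α β
  map_add' X Y := by ext; simp [mul_add, Finset.sum_add_distrib]
  map_smul' c X := by ext; simp [Finset.mul_sum, mul_left_comm]

theorem ofChoiMatrix_apply (W : Matrix (m × n) (m × n) ℂ) (X : Matrix n n ℂ) (μ ν : m) :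
    ofChoiMatrix W X μ ν = ∑ α, ∑ β, W (μ, α) (ν, β) * X α β := rfl

theorem conjTranspose_ofChoiMatrix (W : Matrix (m × n) (m × n) ℂ) (X : Matrix n n ℂ) :
    (ofChoiMatrix W X)ᴴ = ofChoiMatrix Wᴴ Xᴴ := by
  ext μ ν
  simp only [conjTranspose_apply, ofChoiMatrix_apply, star_sum, star_mul']
  exact Finset.sum_comm

theorem dotProduct_ofChoiMatrix_mulVec [Fintype m] (W : Matrix (m × n) (m × n) ℂ) (X : Matrix n n ℂ)
    (v : m → ℂ) :
    star v ⬝ᵥ (ofChoiMatrix W X *ᵥ v) = matrixPairing W (vecMulVec (star v) v ⊗ₖ X) := by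
  simp only [dotProduct, mulVec, ofChoiMatrix_apply, matrixPairing_apply, Fintype.sum_prod_type,
    kroneckerMap_apply, vecMulVec_apply, Finset.mul_sum, Finset.sum_mul]
  refine Finset.sum_congr rfl fun μ _ => ?_
  rw [Finset.sum_comm]
  exact Finset.sum_congr rfl fun α _ => Finset.sum_congr rfl fun ν _ =>
    Finset.sum_congr rfl fun β _ => by ring

end OfChoiMatrix

def maxEntangled (m : Type*) [DecidableEq m] : m × m → ℂ := fun p => if p.1 = p.2 then 1 else 0

theorem star_maxEntangled_dotProduct_mulVec {m : Type*} [Fintype m] [DecidableEq m]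
    (M : Matrix (m × m) (m × m) ℂ) :
    star (maxEntangled m) ⬝ᵥ (M *ᵥ maxEntangled m) = ∑ i, ∑ j, M (i, i) (j, j) := by
  simp [maxEntangled, dotProduct, mulVec, Fintype.sum_prod_type]

theorem star_maxEntangled_dotProduct_extendMap_ofChoiMatrix_mulVec {dA dB : ℕ}
    (W ρ : Matrix (Fin dA × Fin dB) (Fin dA × Fin dB) ℂ) :
    star (maxEntangled (Fin dA)) ⬝ᵥ (extendMap (ofChoiMatrix W) ρ *ᵥ maxEntangled (Fin dA)) =
      matrixPairing W ρ := by
  rw [star_maxEntangled_dotProduct_mulVec]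
  simp only [extendMap, ofChoiMatrix_apply, of_apply, matrixPairing_apply, Fintype.sum_prod_type]
  exact Finset.sum_congr rfl fun _ _ => Finset.sum_comm

section PositiveMaps

variable {dA dB : ℕ}

def IsBlockPositive (W : Matrix (Fin dA × Fin dB) (Fin dA × Fin dB) ℂ) : Prop :=
  ∀ x y, 0 ≤ matrixPairing W (vecProjector x ⊗ₖ vecProjector y)

theorem isBlockPositive_of_unit {W : Matrix (Fin dA × Fin dB) (Fin dA × Fin dB) ℂ}
    (h : ∀ x y, ∑ a, Complex.normSq (x a) = 1 → ∑ b, Complex.normSq (y b) = 1 →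
      0 ≤ matrixPairing W (vecProjector x ⊗ₖ vecProjector y)) :
    IsBlockPositive W := by
  intro x y
  rcases eq_or_ne x 0 with rfl | hx
  · simp [vecProjector_zero]
  rcases eq_or_ne y 0 with rfl | hy
  · simp [vecProjector_zero]
  obtain ⟨c, u, hu, rfl⟩ := exists_eq_smul_unit hx
  obtain ⟨c', u', hu', rfl⟩ := exists_eq_smul_unit hy
  rw [vecProjector_smul, vecProjector_smul, smul_kronecker, kronecker_smul, map_smul, map_smul,
    smul_eq_mul, smul_eq_mul]
  exact mul_nonneg (Complex.zero_le_real.2 (Complex.normSq_nonneg c))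
    (mul_nonneg (Complex.zero_le_real.2 (Complex.normSq_nonneg c')) (h u u' hu hu'))

theorem isPositiveMap_of_posSemidef_vecProjector {d d' : ℕ}
    {Λ : Matrix (Fin d) (Fin d) ℂ →ₗ[ℂ] Matrix (Fin d') (Fin d') ℂ}
    (h : ∀ y, (Λ (vecProjector y)).PosSemidef) : IsPositiveMap Λ := by
  intro X hX
  obtain ⟨K, y, rfl⟩ := posSemidef_iff_eq_sum_vecMulVec.1 hX
  rw [map_sum]
  exact posSemidef_sum _ fun k _ => h (y k)

theorem isPositiveMap_ofChoiMatrix {W : Matrix (Fin dA × Fin dB) (Fin dA × Fin dB) ℂ}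
    (hW : W.IsHermitian) (hblock : IsBlockPositive W) : IsPositiveMap (ofChoiMatrix W) := by
  refine isPositiveMap_of_posSemidef_vecProjector fun y =>
    .of_dotProduct_mulVec_nonneg ?_ fun v => ?_
  · rw [IsHermitian, conjTranspose_ofChoiMatrix, hW.eq, (posSemidef_vecProjector y).isHermitian.eq]
  · have : vecMulVec (star v) v = vecProjector (star v) := by
      rw [vecProjector_eq_vecMulVec, star_star]
    rw [dotProduct_ofChoiMatrix_mulVec, this]
    exact hblock _ _

end PositiveMaps

section Separable

variable {n d d' : ℕ}

def extendMapₗ (Λ : Matrix (Fin d) (Fin d) ℂ →ₗ[ℂ] Matrix (Fin d') (Fin d') ℂ) :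
    Matrix (Fin n × Fin d) (Fin n × Fin d) ℂ →ₗ[ℂ] Matrix (Fin n × Fin d') (Fin n × Fin d') ℂ where
  toFun := extendMap Λ
  map_add' X Y := by
    ext p q
    exact congrFun (congrFun (map_add Λ (of fun μ ν => X (p.1, μ) (q.1, ν))
      (of fun μ ν => Y (p.1, μ) (q.1, ν))) p.2) q.2
  map_smul' c X := by
    ext p q
    exact congrFun (congrFun (map_smul Λ c (of fun μ ν => X (p.1, μ) (q.1, ν))) p.2) q.2

theorem extendMapₗ_apply (Λ : Matrix (Fin d) (Fin d) ℂ →ₗ[ℂ] Matrix (Fin d') (Fin d') ℂ)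
    (X : Matrix (Fin n × Fin d) (Fin n × Fin d) ℂ) : extendMapₗ Λ X = extendMap Λ X := rfl

theorem extendMap_kronecker (Λ : Matrix (Fin d) (Fin d) ℂ →ₗ[ℂ] Matrix (Fin d') (Fin d') ℂ)
    (A : Matrix (Fin n) (Fin n) ℂ) (B : Matrix (Fin d) (Fin d) ℂ) :
    extendMap Λ (A ⊗ₖ B) = A ⊗ₖ Λ B := by
  ext p q
  have : (of fun μ ν => (A ⊗ₖ B) (p.1, μ) (q.1, ν)) = A p.1 q.1 • B := by
    ext; simp
  change Λ _ p.2 q.2 = A p.1 q.1 * Λ B p.2 q.2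
  rw [this, map_smul]
  rfl

theorem posSemidef_extendMap_of_separableState {ρ : Matrix (Fin n × Fin d) (Fin n × Fin d) ℂ}
    (hρ : SeparableState ρ) {Λ : Matrix (Fin d) (Fin d) ℂ →ₗ[ℂ] Matrix (Fin d') (Fin d') ℂ}
    (hΛ : IsPositiveMap Λ) : (extendMap Λ ρ).PosSemidef := by
  obtain ⟨K, p, x, y, hp, -, -, -, rfl⟩ := hρ
  have : extendMap Λ (∑ k, (p k : ℂ) • (vecProjector (x k) ⊗ₖ vecProjector (y k))) =
      ∑ k, (p k : ℂ) • (vecProjector (x k) ⊗ₖ Λ (vecProjector (y k))) := by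
    rw [← extendMapₗ_apply, map_sum]
    simp only [map_smul, extendMapₗ_apply, extendMap_kronecker]
  rw [this]
  exact posSemidef_sum _ fun k _ => ((posSemidef_vecProjector (x k)).kronecker
    (hΛ _ (posSemidef_vecProjector (y k)))).smul (Complex.zero_le_real.2 (hp k))

end Separable

section Witness

variable {dA dB : ℕ}

def productStates (dA dB : ℕ) : Set (Matrix (Fin dA × Fin dB) (Fin dA × Fin dB) ℂ) :=
  {σ | ∃ x y, ∑ a, Complex.normSq (x a) = 1 ∧ ∑ b, Complex.normSq (y b) = 1 ∧
    σ = vecProjector x ⊗ₖ vecProjector y}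

theorem isCompact_setOf_sum_normSq_eq_one (d : ℕ) :
    IsCompact {x : Fin d → ℂ | ∑ i, Complex.normSq (x i) = 1} := by
  refine (isCompact_univ_pi fun _ => isCompact_closedBall (0 : ℂ) 1).of_isClosed_subset
    (isClosed_eq (by fun_prop) continuous_const) fun x hx i _ => ?_
  have : Complex.normSq (x i) ≤ 1 :=
    hx ▸ Finset.single_le_sum (fun j _ => Complex.normSq_nonneg (x j)) (Finset.mem_univ i)
  rwa [Metric.mem_closedBall, dist_zero_right, ← sq_le_one_iff₀ (norm_nonneg _), Complex.sq_norm]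

theorem isCompact_productStates : IsCompact (productStates dA dB) := by
  have : productStates dA dB =
      (fun xy : (Fin dA → ℂ) × (Fin dB → ℂ) => vecProjector xy.1 ⊗ₖ vecProjector xy.2) ''
        ({x | ∑ a, Complex.normSq (x a) = 1} ×ˢ {y | ∑ b, Complex.normSq (y b) = 1}) := by
    ext σ
    constructor
    · rintro ⟨x, y, hx, hy, rfl⟩
      exact ⟨(x, y), ⟨hx, hy⟩, rfl⟩
    · rintro ⟨⟨x, y⟩, ⟨hx, hy⟩, rfl⟩
      exact ⟨x, y, hx, hy, rfl⟩
  rw [this]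
  refine ((isCompact_setOf_sum_normSq_eq_one dA).prod
    (isCompact_setOf_sum_normSq_eq_one dB)).image ?_
  refine continuous_matrix fun p q => ?_
  simp only [kroneckerMap_apply, vecProjector]
  fun_prop

theorem posSemidef_of_mem_productStates {σ : Matrix (Fin dA × Fin dB) (Fin dA × Fin dB) ℂ}
    (hσ : σ ∈ productStates dA dB) : σ.PosSemidef := by
  obtain ⟨x, y, -, -, rfl⟩ := hσ
  exact (posSemidef_vecProjector x).kronecker (posSemidef_vecProjector y)

theorem trace_of_mem_productStates {σ : Matrix (Fin dA × Fin dB) (Fin dA × Fin dB) ℂ}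
    (hσ : σ ∈ productStates dA dB) : σ.trace = 1 := by
  obtain ⟨x, y, hx, hy, rfl⟩ := hσ
  rw [trace_kronecker, trace_vecProjector, trace_vecProjector, hx, hy]
  simp

theorem separableState_of_mem_convexHull {ρ : Matrix (Fin dA × Fin dB) (Fin dA × Fin dB) ℂ}
    (hρ : ρ ∈ convexHull ℝ (productStates dA dB)) : SeparableState ρ := by
  obtain ⟨ι, _, w, σ, hw, hw1, hσ, rfl⟩ := mem_convexHull_iff_exists_fintype.1 hρ
  choose x y hx hy hσ using hσ
  set e := (Fintype.equivFin ι).symm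
  refine ⟨Fintype.card ι, w ∘ e, x ∘ e, y ∘ e, fun k => hw _, ?_, fun k => hx _,
    fun k => hy _, ?_⟩
  · rw [← hw1]
    exact e.sum_comp w
  · rw [← e.sum_comp]
    simp [hσ, Complex.coe_smul]

theorem exists_isBlockPositive_matrixPairing_neg {ρ : Matrix (Fin dA × Fin dB) (Fin dA × Fin dB) ℂ}
    (hρ : ρ.IsHermitian) (htr : ρ.trace = 1) (hent : ¬ SeparableState ρ) :
    ∃ W, W.IsHermitian ∧ IsBlockPositive W ∧ matrixPairing W ρ < 0 := by
  have : LocallyConvexSpace ℝ (Matrix (Fin dA × Fin dB) (Fin dA × Fin dB) ℂ) :=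
    inferInstanceAs (LocallyConvexSpace ℝ (_ → _ → ℂ))
  obtain ⟨f, u, hf, hu⟩ := RCLike.geometric_hahn_banach_closed_point (𝕜 := ℂ)
    (convex_convexHull ℝ _) (isCompact_convexHull isCompact_productStates).isClosed
    (mt separableState_of_mem_convexHull hent)
  obtain ⟨H, hH, hHf⟩ := exists_isHermitian_matrixPairing_eq_re f.toLinearMap
  have hW : ∀ σ : Matrix (Fin dA × Fin dB) (Fin dA × Fin dB) ℂ, σ.IsHermitian → σ.trace = 1 →
      matrixPairing ((u : ℂ) • 1 - H) σ = ((u - (f σ).re : ℝ) : ℂ) := by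
    intro σ hσ hσtr
    rw [map_sub, LinearMap.sub_apply, LinearMap.map_smul₂, matrixPairing_one_left, hσtr, hHf σ hσ]
    simp
  refine ⟨(u : ℂ) • 1 - H, ?_, isBlockPositive_of_unit fun x y hx hy => ?_, ?_⟩
  · simp [IsHermitian, conjTranspose_sub, hH.eq]
  · have hσ : vecProjector x ⊗ₖ vecProjector y ∈ productStates dA dB := ⟨x, y, hx, hy, rfl⟩
    rw [hW _ (posSemidef_of_mem_productStates hσ).isHermitian (trace_of_mem_productStates hσ)]
    exact Complex.zero_le_real.2 (sub_nonneg.2 (hf _ (subset_convexHull ℝ _ hσ)).le)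
  · rw [hW ρ hρ htr]
    exact_mod_cast sub_neg.2 hu

end Witness

/-- **Horodecki positive-maps separability criterion.** A density matrix `ρ` on
`ℂ^{d_A} ⊗ ℂ^{d_B}` is separable if and only if `(I_{d_A} ⊗ Λ)(ρ)` is positive semidefinite
for every positive linear map `Λ` from `d_B × d_B` to `d_A × d_A` complex matrices. -/
theorem separable_iff_positive_maps (dA dB : ℕ)
    (ρ : Matrix (Fin dA × Fin dB) (Fin dA × Fin dB) ℂ)
    (hpsd : ρ.PosSemidef) (htr : ρ.trace = 1) :
    SeparableState ρ ↔
      ∀ Λ : Matrix (Fin dB) (Fin dB) ℂ →ₗ[ℂ] Matrix (Fin dA) (Fin dA) ℂ,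
        IsPositiveMap Λ → (extendMap Λ ρ).PosSemidef := by
  refine ⟨fun hsep Λ hΛ => posSemidef_extendMap_of_separableState hsep hΛ, fun hall => ?_⟩
  by_contra hent
  obtain ⟨W, hW, hblock, hWρ⟩ := exists_isBlockPositive_matrixPairing_neg hpsd.isHermitian htr hent
  have hΩ := (hall _ (isPositiveMap_ofChoiMatrix hW hblock)).dotProduct_mulVec_nonneg
    (maxEntangled (Fin dA))
  rw [star_maxEntangled_dotProduct_extendMap_ofChoiMatrix_mulVec] at hΩ
  exact (hΩ.trans_lt hWρ).false
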